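/- arXiv:2310.04870 — 2 statements merged into one kernel-verified Lean document; each statement's English description precedes it below -/
import Mathlib

section
/- For any configuration (P, A, T) reachable by valid Lemur rule applications from an initial configuration (P, ∅, [p₀]), every element p of the trail T satisfies: p implies p₀ with respect to P. -/
open scoped Classical

/-- An execution is a finite list of (state, line) pairs. -/
abbrev Execution (σ : Type*) := List (σ × ℕ)

/-- A program is a set of executions. -/
abbrev Program (σ : Type*) := Set (Execution σ)

/-- A property is a predicate on states together with a line number. -/
abbrev Property (σ : Type*) := (σ → Prop) × ℕ

/-- A property holds on an execution if its predicate is true at every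
occurrence of its line. -/
def holdsOn {σ : Type*} (p : Property σ) (e : Execution σ) : Prop :=
  ∀ pr ∈ e, pr.2 = p.2 → p.1 pr.1

/-- `p` is an invariant on `P` if it holds on every execution of `P`. -/
def isInvariant {σ : Type*} (P : Program σ) (p : Property σ) : Prop :=
  ∀ e ∈ P, holdsOn p e

/-- Truncate an execution at the first occurrence of `q`'s line where `q`'s
predicate fails. -/
noncomputable def truncAt {σ : Type*} (q : Property σ) : Execution σ → Execution σ
  | [] => []
  | a :: l => if a.2 = q.2 ∧ ¬ q.1 a.1 then [] else a :: truncAt q l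

/-- The program `asm P q`: each execution of `P` truncated at the first
failure of the assumption `q`. -/
noncomputable def asmP {σ : Type*} (P : Program σ) (q : Property σ) : Program σ :=
  (truncAt q) '' P

/-- `q` implies `p` with respect to `P`: `p` is an invariant on `asm(P, q)`. -/
noncomputable def impliesWrt {σ : Type*} (P : Program σ) (q p : Property σ) : Prop :=
  isInvariant (asmP P q) p

/-- `q` is stable for `P`: on each execution, `q`'s predicate is either true at
all occurrences of `q`'s line or false at all of them. -/
def isStable {σ : Type*} (P : Program σ) (q : Property σ) : Prop :=
  ∀ e ∈ P, (∀ pr ∈ e, pr.2 = q.2 → q.1 pr.1) ∨ (∀ pr ∈ e, pr.2 = q.2 → ¬ q.1 pr.1)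

/-- The negation of a property. -/
def pneg {σ : Type*} (q : Property σ) : Property σ := (fun s => ¬ q.1 s, q.2)


/-- Apply an optional assumption to a program. -/
noncomputable def asmOpt {σ : Type*} (P : Program σ) : Option (Property σ) → Program σ
  | none => P
  | some q => asmP P q

/-- A verifier takes a program, an optional assumption and a property, and
returns `some true` (proven), `some false` (falsified) or `none` (unknown). -/
abbrev Verifier (σ : Type*) :=
  Program σ → Option (Property σ) → Property σ → Option Bool

/-- Configurations of the Lemur calculus: a triple of program, assumption set
(empty or singleton) and trail, or a terminal `success`/`fail` state. -/
inductive Conf (σ : Type*) where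
  | state (P : Program σ) (A : Option (Property σ)) (T : List (Property σ))
  | success
  | fail

/-- The transition rules of the Lemur calculus, parameterized by a verifier
`V`, a proposal oracle `Ωp` and a repair oracle `Ωr`. -/
inductive LStep {σ : Type*} (V : Verifier σ)
    (Ωp : Program σ → Property σ → Set (Property σ))
    (Ωr : Program σ → Property σ → Property σ → Option Bool → Set (Property σ)) :
    Conf σ → Conf σ → Prop where
  | propose {P A T' p q} (h1 : V P A p = none) (h2 : q ∈ Ωp P p) :
      LStep V Ωp Ωr (.state P A (T' ++ [p])) (.state P (some q) (T' ++ [p]))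
  | decide {P q T' p} (h : V P (some q) p = some true) :
      LStep V Ωp Ωr (.state P (some q) (T' ++ [p])) (.state P none (T' ++ [p, q]))
  | backtrack {P A T' p q q'} (h1 : V P A q ≠ some true) (h2 : q' ∈ Ωp P p) :
      LStep V Ωp Ωr (.state P A (T' ++ [p, q])) (.state P (some q') (T' ++ [p]))
  | repair1 {P q T' p q'} (h1 : V P (some q) p = none) (h2 : q' ∈ Ωr P p q none) :
      LStep V Ωp Ωr (.state P (some q) (T' ++ [p])) (.state P (some q') (T' ++ [p]))
  | repair2 {P T' p q q'} (h1 : V P none q = some false)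
      (h2 : q' ∈ Ωr P p q (some false)) :
      LStep V Ωp Ωr (.state P none (T' ++ [p, q])) (.state P (some q') (T' ++ [p]))
  | success1 {P T' p} (h : V P none p = some true) :
      LStep V Ωp Ωr (.state P none (T' ++ [p])) .success
  | success2 {P T' p q} (hs : isStable P q) (h : V P (some (pneg q)) p = some true) :
      LStep V Ωp Ωr (.state P none (T' ++ [p, q])) .success
  | fail {P A p} (h : V P A p = some false) :
      LStep V Ωp Ωr (.state P A [p]) .fail

/-- A configuration is reachable from another by a sequence of valid rule
applications. -/
def Reaches {σ : Type*} (V : Verifier σ)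
    (Ωp : Program σ → Property σ → Set (Property σ))
    (Ωr : Program σ → Property σ → Property σ → Option Bool → Set (Property σ)) :
    Conf σ → Conf σ → Prop :=
  Relation.ReflTransGen (LStep V Ωp Ωr)

/-! `asm(P, q)` cuts every execution down to its longest prefix on which `q` holds. Hence
implication with respect to `P` is reflexive and transitive, and "every property on the trail
implies `p₀`" is an invariant of the calculus: Decide appends `q` after `p` only once the sound
verifier has proved that `q` implies `p`, and every other rule keeps or shortens the trail. -/

section

variable {σ : Type*}

lemma holdsOn.mono {p : Property σ} {l e : Execution σ} (he : holdsOn p e) (hl : l ⊆ e) :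
    holdsOn p l :=
  fun pr hpr => he pr (hl hpr)

lemma holdsOn_truncAt (q : Property σ) (e : Execution σ) : holdsOn q (truncAt q e) := by
  induction e with
  | nil => simp [truncAt, holdsOn]
  | cons a l ih =>
    rw [truncAt]
    split_ifs with hfail
    · simp [holdsOn]
    · intro pr hpr hline
      rcases List.mem_cons.mp hpr with rfl | hpr
      · by_contra hq
        exact hfail ⟨hline, hq⟩
      · exact ih pr hpr hline

lemma truncAt_prefix (q : Property σ) (e : Execution σ) : truncAt q e <+: e := by
  induction e with
  | nil => exact List.nil_prefix
  | cons a l ih =>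
    rw [truncAt]
    split_ifs
    exacts [List.nil_prefix, (List.prefix_cons_inj a).mpr ih]

lemma truncAt_append_of_holdsOn {q : Property σ} {l : Execution σ}
    (hl : holdsOn q l) (t : Execution σ) : truncAt q (l ++ t) = l ++ truncAt q t := by
  induction l with
  | nil => rfl
  | cons a l ih =>
    rw [List.cons_append, truncAt, if_neg fun hfail => hfail.2 (hl a (by simp) hfail.1),
      ih (hl.mono (List.subset_cons_self a l))]
    rfl

lemma impliesWrt_refl (P : Program σ) (p : Property σ) : impliesWrt P p p := by
  rintro _ ⟨e, -, rfl⟩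
  exact holdsOn_truncAt p e

/-- `truncAt r e` is a prefix of `e` on which `q` holds, so it is a prefix of `truncAt q e`, where
`p` holds. -/
lemma impliesWrt_trans {P : Program σ} {p q r : Property σ}
    (hrq : impliesWrt P r q) (hqp : impliesWrt P q p) : impliesWrt P r p := by
  rintro _ ⟨e, he, rfl⟩
  obtain ⟨t, hprefix⟩ := truncAt_prefix r e
  have hq : holdsOn q (truncAt r e) := hrq _ ⟨e, he, rfl⟩
  have hp : holdsOn p (truncAt q e) := hqp _ ⟨e, he, rfl⟩
  rw [← hprefix, truncAt_append_of_holdsOn hq] at hp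
  exact hp.mono (List.subset_append_left _ _)

def Verifier.Sound (V : Verifier σ) : Prop :=
  ∀ (P : Program σ) (A : Option (Property σ)) (p : Property σ),
    V P A p = some true → isInvariant (asmOpt P A) p

def Conf.TrailImplies (p₀ : Property σ) : Conf σ → Prop
  | .state P _ T => ∀ p ∈ T, impliesWrt P p p₀
  | .success | .fail => True

variable {V : Verifier σ} {Ωp : Program σ → Property σ → Set (Property σ)}
  {Ωr : Program σ → Property σ → Property σ → Option Bool → Set (Property σ)}
  {p₀ : Property σ} {c c' : Conf σ}

lemma LStep.trailImplies (hV : V.Sound) (hstep : LStep V Ωp Ωr c c') (hc : c.TrailImplies p₀) :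
    c'.TrailImplies p₀ := by
  cases hstep with
  | propose | repair1 => exact hc
  | success1 | success2 | fail => trivial
  | backtrack | repair2 => exact fun x hx => hc x (by grind)
  | @decide P q T' p hqp =>
    have hq : impliesWrt P q p₀ := impliesWrt_trans (hV P (some q) p hqp) (hc p (by simp))
    intro x hx
    rw [show T' ++ [p, q] = T' ++ [p] ++ [q] by simp, List.mem_append, List.mem_singleton] at hx
    rcases hx with hx | rfl
    exacts [hc x hx, hq]

lemma Reaches.trailImplies (hV : V.Sound) (hreach : Reaches V Ωp Ωr c c')
    (hc : c.TrailImplies p₀) : c'.TrailImplies p₀ := by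
  induction hreach with
  | refl => exact hc
  | tail _ hstep ih => exact hstep.trailImplies hV ih

end

/-- In any configuration `(P, A, T)` reachable by valid Lemur rule
applications from `(P, ∅, [p₀])`, assuming the verifier is sound for positive
answers, every element `p` of the trail implies `p₀` with respect to `P`. -/
theorem stmt_8 {σ : Type*} (V : Verifier σ)
    (Ωp : Program σ → Property σ → Set (Property σ))
    (Ωr : Program σ → Property σ → Property σ → Option Bool → Set (Property σ))
    (hV : ∀ (P : Program σ) (A : Option (Property σ)) (p : Property σ),
      V P A p = some true → isInvariant (asmOpt P A) p)
    (P : Program σ) (p₀ : Property σ)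
    (A : Option (Property σ)) (T : List (Property σ))
    (h : Reaches V Ωp Ωr (.state P none [p₀]) (.state P A T)) :
    ∀ p ∈ T, impliesWrt P p p₀ := by
  have hinit : (Conf.state P none [p₀]).TrailImplies p₀ := by
    simpa [Conf.TrailImplies] using impliesWrt_refl P p₀
  exact h.trailImplies hV hinit
end

section
/- Soundness of the Lemur calculus: if the Success state is reached by a sequence of valid rule applications starting from the configuration (P, ∅, [p₀]), then p₀ is an invariant on P. -/
open scoped Classical

/-!
Along every run from `(P, ∅, [p₀])` the trail starts with `p₀` and each element implies its
predecessor with respect to `P`: the only rule that extends the trail, `Decide`, appends `q`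
to `p` after the verifier certified `q ⟹ p`. Hence invariance of the last element of the trail
propagates back to `p₀`. Both success rules establish that invariance: `Success 1` directly through the verifier,
`Success 2` by a case split on the stable property `q`, since on each execution either `q` or
`¬q` holds everywhere and then truncating at it changes nothing.
-/

theorem truncAt_eq_self {σ : Type*} {q : Property σ} :
    ∀ {e : Execution σ}, holdsOn q e → truncAt q e = e
  | [], _ => rfl
  | a :: l, h => by
    have ha : ¬(a.2 = q.2 ∧ ¬q.1 a.1) := fun ⟨hline, hfail⟩ => hfail (h a (by simp) hline)
    rw [truncAt, if_neg ha, truncAt_eq_self fun pr hpr => h pr (List.mem_cons_of_mem a hpr)]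

theorem impliesWrt.holdsOn {σ : Type*} {P : Program σ} {q p : Property σ} {e : Execution σ}
    (h : impliesWrt P q p) (he : e ∈ P) (hq : holdsOn q e) : holdsOn p e := by
  simpa only [truncAt_eq_self hq] using h (truncAt q e) ⟨e, he, rfl⟩

theorem isInvariant_of_impliesWrt {σ : Type*} {P : Program σ} {q p : Property σ}
    (hq : isInvariant P q) (h : impliesWrt P q p) : isInvariant P p :=
  fun e he => h.holdsOn he (hq e he)

theorem isInvariant_of_isStable {σ : Type*} {P : Program σ} {q p : Property σ}
    (hs : isStable P q) (hpos : impliesWrt P q p) (hneg : impliesWrt P (pneg q) p) :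
    isInvariant P p := fun e he =>
  (hs e he).elim (hpos.holdsOn he) (hneg.holdsOn he)

theorem List.head?_append_pair {α : Type*} (l : List α) (a b : α) :
    (l ++ [a, b]).head? = (l ++ [a]).head? := by
  cases l <;> rfl

section Trail

variable {σ : Type*} (P : Program σ) (p₀ : Property σ)

def TrailSound (T : List (Property σ)) : Prop :=
  T.head? = some p₀ ∧ T.IsChain (flip (impliesWrt P))

variable {P p₀} {T : List (Property σ)} {p q : Property σ}

theorem TrailSound.append_pair (hT : TrailSound P p₀ (T ++ [p])) (hqp : impliesWrt P q p) :
    TrailSound P p₀ (T ++ [p, q]) := by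
  obtain ⟨hhead, hchain⟩ := hT
  refine ⟨?_, ?_⟩
  · rwa [List.head?_append_pair]
  · simpa [List.isChain_append_cons_cons] using ⟨hchain, hqp⟩

theorem TrailSound.of_append_pair (hT : TrailSound P p₀ (T ++ [p, q])) :
    TrailSound P p₀ (T ++ [p]) ∧ impliesWrt P q p := by
  obtain ⟨hhead, hchain⟩ := hT
  rw [List.isChain_append_cons_cons] at hchain
  exact ⟨⟨List.head?_append_pair .. ▸ hhead, hchain.1⟩, hchain.2.1⟩

theorem TrailSound.isInvariant (hT : TrailSound P p₀ (T ++ [p])) (hp : isInvariant P p) :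
    isInvariant P p₀ :=
  hT.2.backwards_induction (_root_.isInvariant P) _
    (fun _ _ hyx hy => isInvariant_of_impliesWrt hy hyx)
    (fun _ => by simpa using hp) _ (List.mem_of_mem_head? hT.1)

end Trail

def ConfSound {σ : Type*} (P : Program σ) (p₀ : Property σ) : Conf σ → Prop
  | .state P' _ T => P' = P ∧ TrailSound P p₀ T
  | .success => isInvariant P p₀
  | .fail => True

theorem LStep.confSound {σ : Type*} {V : Verifier σ}
    {Ωp : Program σ → Property σ → Set (Property σ)}
    {Ωr : Program σ → Property σ → Property σ → Option Bool → Set (Property σ)}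
    (hV : ∀ (P : Program σ) (A : Option (Property σ)) (p : Property σ),
      V P A p = some true → isInvariant (asmOpt P A) p)
    {P : Program σ} {p₀ : Property σ} {c c' : Conf σ}
    (hstep : LStep V Ωp Ωr c c') (hc : ConfSound P p₀ c) : ConfSound P p₀ c' := by
  cases hstep with
  | propose | repair1 => exact hc
  | fail => trivial
  | decide hd =>
    obtain ⟨rfl, hT⟩ := hc
    exact ⟨rfl, hT.append_pair (hV _ _ _ hd)⟩
  | backtrack | repair2 =>
    obtain ⟨rfl, hT⟩ := hc
    exact ⟨rfl, hT.of_append_pair.1⟩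
  | success1 hd =>
    obtain ⟨rfl, hT⟩ := hc
    exact hT.isInvariant (hV _ _ _ hd)
  | success2 hs hd =>
    obtain ⟨rfl, hT⟩ := hc
    obtain ⟨hT, hqp⟩ := hT.of_append_pair
    exact hT.isInvariant (isInvariant_of_isStable hs hqp (hV _ _ _ hd))

/-- Soundness of the Lemur calculus: if the `success` state is reachable by
valid rule applications from `(P, ∅, [p₀])` and the verifier is sound for
positive answers, then `p₀` is an invariant on `P`. -/
theorem stmt_10 {σ : Type*} (V : Verifier σ)
    (Ωp : Program σ → Property σ → Set (Property σ))
    (Ωr : Program σ → Property σ → Property σ → Option Bool → Set (Property σ))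
    (hV : ∀ (P : Program σ) (A : Option (Property σ)) (p : Property σ),
      V P A p = some true → isInvariant (asmOpt P A) p)
    (P : Program σ) (p₀ : Property σ)
    (h : Reaches V Ωp Ωr (.state P none [p₀]) .success) :
    isInvariant P p₀ := by
  have hreach : ∀ c, Reaches V Ωp Ωr (.state P none [p₀]) c → ConfSound P p₀ c := by
    intro c hc
    induction hc with
    | refl => exact ⟨rfl, rfl, List.isChain_singleton p₀⟩
    | tail _ hstep ih => exact hstep.confSound hV ih
  exact hreach .success h
end
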